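/- Let p be a prime and let α, s, t ∈ ℕ satisfy p^α = sf + tg. Then in ℤⁿ one has p^α·wₙ = (sg + t(2g−f))·(v₁ + ⋯ + v_{n−1}) + (s((n−1)g−(n−2)f) + t(ng−(n−1)f))·vₙ + tg(f−g)·(w₁ + ⋯ + w_{n−1}), all coefficients being nonnegative integers; consequently the binomial F_{n,p} belongs to ker φ. -/

import Mathlib

/-!
The monomial map `φ` sends a monomial with exponent vector `(a, b)` to `u ^ (∑ aᵢ vᵢ + ∑ bᵢ wᵢ)`,
so `F_{n,p}` lies in `ker φ` because its two monomials realise the two sides of the lattice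
identity. With `c = (n-1)g - (n-2)f` the identity reads, coordinate by coordinate,
`g² (sf+tg) = fg (sg + t(2g-f)) + (f-g) tg(f-g)` and
`gc (sf+tg) = fg (sc + t(c+g-f)) + (n-1)(f-g) tg(f-g)`, polynomial identities in `f, g, s, t, n`.
The coefficients are nonnegative because `(n-1)f ≤ ng` with `n ≥ 3` forces `f ≤ 2g` and
`(n-2)f ≤ (n-1)g`.
-/

open MvPolynomial

lemma le_two_mul_of_sub_one_mul_le {n f g : ℕ} (hn : 3 ≤ n) (h : (n - 1) * f ≤ n * g) :
    f ≤ 2 * g := by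
  obtain ⟨k, rfl⟩ := Nat.exists_eq_add_of_le hn
  rw [show 3 + k - 1 = k + 2 by omega] at h
  nlinarith

lemma sub_two_mul_le_sub_one_mul {n f g : ℕ} (hgf : g ≤ f) (h : (n - 1) * f ≤ n * g) :
    (n - 2) * f ≤ (n - 1) * g := by
  rcases Nat.lt_or_ge n 2 with hn | hn
  · simp [Nat.sub_eq_zero_of_le hn.le]
  · obtain ⟨k, rfl⟩ := Nat.exists_eq_add_of_le hn
    rw [show 2 + k - 1 = k + 1 by omega, show 2 + k - 2 = k by omega] at *
    nlinarith

lemma inner_exponent_identity {f g s t : ℕ} (hgf : g ≤ f) (hf : f ≤ 2 * g) :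
    g ^ 2 * (s * f + t * g) = f * g * (s * g + t * (2 * g - f)) + (f - g) * (t * g * (f - g)) := by
  zify [hgf, hf]
  ring

lemma last_exponent_identity {n f g s t : ℕ} (hn : 2 ≤ n) (hgf : g ≤ f)
    (hng : (n - 1) * f ≤ n * g) :
    g * ((n - 1) * g - (n - 2) * f) * (s * f + t * g) =
      f * g * (s * ((n - 1) * g - (n - 2) * f) + t * (n * g - (n - 1) * f)) +
        (n - 1) * (f - g) * (t * g * (f - g)) := by
  zify [hn, (by omega : 1 ≤ n), hgf, hng, sub_two_mul_le_sub_one_mul hgf hng]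
  ring

lemma lattice_identity {M : Type*} [AddCommGroup M] (n f g s t : ℤ) (A B : M) :
    (s * f + t * g) • (g ^ 2 • A + (g * ((n - 1) * g - (n - 2) * f)) • B) =
      (s * g + t * (2 * g - f)) • ((f * g) • A) +
        (s * ((n - 1) * g - (n - 2) * f) + t * (n * g - (n - 1) * f)) • ((f * g) • B) +
        (t * g * (f - g)) • ((f - g) • (A + (n - 1) • B)) := by
  module

lemma sum_smul_add_const {ι M : Type*} [Fintype ι] [AddCommGroup M] (c : ℤ) (x : ι → M) (y : M) :
    ∑ i, c • (x i + y) = c • (∑ i, x i + (Fintype.card ι : ℤ) • y) := by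
  rw [← Finset.smul_sum, Finset.sum_add_distrib, Finset.sum_const, Finset.card_univ,
    natCast_zsmul]

lemma pow_mul_pow_pow_eq_of_exponents {M : Type*} [CommMonoid M] (P L : M)
    {m e e' k j j' a b d : ℕ} (he : e * m = k * a + j * d) (he' : e' * m = k * b + j' * d) :
    (P ^ e * L ^ e') ^ m = P ^ (k * a) * L ^ (k * b) * (P ^ j * L ^ j') ^ d := by
  simp only [mul_pow, ← pow_mul, he, he', pow_add]
  exact mul_mul_mul_comm ..

/-- In the setting of the paper (`n ≥ 3`, coprime `f > g > 0`,
`(n-1)f ≤ ng`), for a prime `p` and `α, s, t ∈ ℕ` with `p^α = sf + tg`, one has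
`p^α·wₙ = (sg+t(2g−f))(v₁+⋯+v_{n-1}) + (s((n−1)g−(n−2)f)+t(ng−(n−1)f))·vₙ
+ tg(f−g)(w₁+⋯+w_{n-1})` in `ℤⁿ`, all coefficients being nonnegative; consequently the
binomial `F_{n,p}` lies in `ker φ`. -/
theorem stmt8 (n : ℕ) (hn : 3 ≤ n) (f g : ℕ)
    (hgf : g < f) (hng : (n - 1) * f ≤ n * g)
    (v : Fin n → Fin n → ℤ)
    (hv : ∀ i : Fin n, v i = Pi.single i ((f * g : ℕ) : ℤ))
    (w : Fin (n - 1) → Fin n → ℤ)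
    (hw : ∀ i : Fin (n - 1), w i = ((f : ℤ) - (g : ℤ)) •
      (Pi.single (Fin.castLE (by omega) i) (1 : ℤ) +
        Pi.single (⟨n - 1, by omega⟩ : Fin n) (1 : ℤ)))
    (wn : Fin n → ℤ)
    (hwn : wn = (g : ℤ) ^ 2 •
        (∑ i : Fin (n - 1), Pi.single (Fin.castLE (by omega) i) (1 : ℤ) : Fin n → ℤ) +
      ((g : ℤ) * (((n : ℤ) - 1) * (g : ℤ) - ((n : ℤ) - 2) * (f : ℤ))) •
        Pi.single (⟨n - 1, by omega⟩ : Fin n) (1 : ℤ))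
    (K : Type*) [Field K]
    (φ : MvPolynomial (Fin n ⊕ Fin n) K →ₐ[K] MvPolynomial (Fin n) K)
    (hφx : ∀ i : Fin n, φ (X (Sum.inl i)) = X i ^ (f * g))
    (hφy : ∀ i : Fin (n - 1), φ (X (Sum.inr (Fin.castLE (by omega) i))) =
      X (Fin.castLE (by omega) i : Fin n) ^ (f - g) * X (⟨n - 1, by omega⟩ : Fin n) ^ (f - g))
    (hφyn : φ (X (Sum.inr (⟨n - 1, by omega⟩ : Fin n))) =
      (∏ i : Fin (n - 1), X (Fin.castLE (by omega) i : Fin n) ^ g ^ 2) *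
        X (⟨n - 1, by omega⟩ : Fin n) ^ (g * ((n - 1) * g - (n - 2) * f)))
    (p : ℕ) (α s t : ℕ) (hpst : p ^ α = s * f + t * g) :
    ((p ^ α : ℕ) : ℤ) • wn =
        ((s : ℤ) * (g : ℤ) + (t : ℤ) * (2 * (g : ℤ) - (f : ℤ))) •
          (∑ i : Fin (n - 1), v (Fin.castLE (by omega) i)) +
        ((s : ℤ) * (((n : ℤ) - 1) * (g : ℤ) - ((n : ℤ) - 2) * (f : ℤ)) +
          (t : ℤ) * ((n : ℤ) * (g : ℤ) - ((n : ℤ) - 1) * (f : ℤ))) • v ⟨n - 1, by omega⟩ +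
        ((t : ℤ) * (g : ℤ) * ((f : ℤ) - (g : ℤ))) • (∑ i : Fin (n - 1), w i) ∧
    0 ≤ (s : ℤ) * (g : ℤ) + (t : ℤ) * (2 * (g : ℤ) - (f : ℤ)) ∧
    0 ≤ (s : ℤ) * (((n : ℤ) - 1) * (g : ℤ) - ((n : ℤ) - 2) * (f : ℤ)) +
        (t : ℤ) * ((n : ℤ) * (g : ℤ) - ((n : ℤ) - 1) * (f : ℤ)) ∧
    0 ≤ (t : ℤ) * (g : ℤ) * ((f : ℤ) - (g : ℤ)) ∧
    (X (Sum.inr (⟨n - 1, by omega⟩ : Fin n)) ^ (p ^ α) -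
        (∏ i : Fin (n - 1), X (Sum.inl (Fin.castLE (by omega) i : Fin n))) ^
            (s * g + t * (2 * g - f)) *
          X (Sum.inl (⟨n - 1, by omega⟩ : Fin n)) ^
            (s * ((n - 1) * g - (n - 2) * f) + t * (n * g - (n - 1) * f)) *
          (∏ i : Fin (n - 1), X (Sum.inr (Fin.castLE (by omega) i : Fin n))) ^
            (t * g * (f - g)) :
      MvPolynomial (Fin n ⊕ Fin n) K) ∈ RingHom.ker φ := by
  have h2g := le_two_mul_of_sub_one_mul_le hn hng
  have h2 := sub_two_mul_le_sub_one_mul hgf.le hng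
  refine ⟨?_, ?_, ?_, ?_, ?_⟩
  · have hv' (i : Fin n) : v i = ((f : ℤ) * g) • Pi.single i 1 := by
      rw [hv, ← Pi.single_smul, smul_eq_mul, mul_one, Nat.cast_mul]
    rw [Fintype.sum_congr _ _ hw, sum_smul_add_const, Fintype.card_fin,
      Nat.cast_pred (by omega : 0 < n), hwn, hpst]
    simp only [hv', ← Finset.smul_sum]
    push_cast
    exact lattice_identity _ _ _ _ _ _ _
  · simpa [Nat.cast_sub h2g] using Int.natCast_nonneg (s * g + t * (2 * g - f))
  · simpa [Nat.cast_sub h2, Nat.cast_sub hng, Nat.cast_sub (by omega : 1 ≤ n),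
      Nat.cast_sub (by omega : 2 ≤ n)] using
      Int.natCast_nonneg (s * ((n - 1) * g - (n - 2) * f) + t * (n * g - (n - 1) * f))
  · simpa [Nat.cast_sub hgf.le] using Int.natCast_nonneg (t * g * (f - g))
  · rw [RingHom.sub_mem_ker_iff]
    simp only [map_pow, map_mul, map_prod, hφx, hφy, hφyn, Finset.prod_mul_distrib,
      Finset.prod_pow, Finset.prod_const, Finset.card_univ, Fintype.card_fin, ← pow_mul]
    rw [hpst]
    exact pow_mul_pow_pow_eq_of_exponents _ _ (inner_exponent_identity hgf.le h2g)
      (last_exponent_identity (by omega) hgf.le hng)
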